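/- Let $(\mathfrak{g}, \langle\cdot,\cdot\rangle)$ be a complex H-type Lie algebra. If $z, w \in \mathfrak{z}$ satisfy $\langle z, w\rangle = 0$ and $\langle iz, w\rangle = 0$, then $J_z J_w = J_w J_z = 0$ as maps on $\mathfrak{v}$. -/

import Mathlib

/-!
Polarizing the isometry condition and using that each `J z` is skew gives
`J z ∘ J w + J w ∘ J z = -2 ⟪z, w⟫ • id` on `𝔳`. Since `J (I • w) = I • J w` and
`J z (I • u) = -I • J z u`, the hypothesis `⟪I • z, w⟫ = 0` makes `J z` and `J w` commute,
while `⟪z, w⟫ = 0` makes them anticommute; hence both composites vanish.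
-/

open scoped RealInnerProductSpace

attribute [-instance] LieRing.toAddCommGroup

theorem Submodule.eq_of_forall_inner_eq {E : Type*} [NormedAddCommGroup E]
    [InnerProductSpace ℝ E] (K : Submodule ℝ E) {x y : E} (hx : x ∈ K) (hy : y ∈ K)
    (h : ∀ v ∈ K, ⟪x, v⟫ = ⟪y, v⟫) : x = y := by
  have hxy : ⟪x - y, x - y⟫ = 0 := by rw [inner_sub_left, h _ (K.sub_mem hx hy), sub_self]
  exact sub_eq_zero.mp (inner_self_eq_zero.mp hxy)

/-- Without `LieRing.toAddCommGroup` as an instance, `0 : G` is the zero of a second additive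
structure on `G`; the bracket identifies it with the zero of the Lie ring. -/
theorem lie_self_eq_zero_of_lie_zero_zero {G : Type*} [LieRing G] [Zero G]
    (h : ⁅(0 : G), (0 : G)⁆ = 0) (x : G) : ⁅x, x⁆ = 0 := by
  rw [lie_self, ← lie_self (0 : G), h]

section Real

variable {G : Type*} [LieRing G] [NormedAddCommGroup G] [InnerProductSpace ℝ G]

structure IsJMap (Z V : Submodule ℝ G) (J : G → G → G) : Prop where
  apply_mem : ∀ z ∈ Z, ∀ u ∈ V, J z u ∈ V
  inner_apply_left : ∀ z ∈ Z, ∀ u ∈ V, ∀ v ∈ V, ⟪J z u, v⟫ = ⟪z, ⁅u, v⁆⟫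

structure IsHTypeJMap (Z V : Submodule ℝ G) (J : G → G → G) : Prop extends IsJMap Z V J where
  inner_apply_apply_of_norm_eq_one :
    ∀ z ∈ Z, ‖z‖ = 1 → ∀ u ∈ V, ∀ v ∈ V, ⟪J z u, J z v⟫ = ⟪u, v⟫

variable {Z V : Submodule ℝ G} {J : G → G → G} {z w u v : G}

namespace IsJMap

theorem add_left (hJ : IsJMap Z V J) (hz : z ∈ Z) (hw : w ∈ Z) (hu : u ∈ V) :
    J (z + w) u = J z u + J w u := by
  refine V.eq_of_forall_inner_eq (hJ.apply_mem _ (Z.add_mem hz hw) _ hu)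
    (V.add_mem (hJ.apply_mem _ hz _ hu) (hJ.apply_mem _ hw _ hu)) fun v hv => ?_
  rw [inner_add_left, hJ.inner_apply_left _ (Z.add_mem hz hw) _ hu _ hv,
    hJ.inner_apply_left _ hz _ hu _ hv, hJ.inner_apply_left _ hw _ hu _ hv, inner_add_left]

theorem smul_left (hJ : IsJMap Z V J) (c : ℝ) (hz : z ∈ Z) (hu : u ∈ V) :
    J (c • z) u = c • J z u := by
  refine V.eq_of_forall_inner_eq (hJ.apply_mem _ (Z.smul_mem c hz) _ hu)
    (V.smul_mem c (hJ.apply_mem _ hz _ hu)) fun v hv => ?_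
  rw [real_inner_smul_left, hJ.inner_apply_left _ (Z.smul_mem c hz) _ hu _ hv,
    hJ.inner_apply_left _ hz _ hu _ hv, real_inner_smul_left]

theorem inner_apply_self (hJ : IsJMap Z V J) (hlie : ∀ x : G, ⁅x, x⁆ = 0) (hz : z ∈ Z)
    (hu : u ∈ V) : ⟪J z u, u⟫ = 0 := by
  rw [hJ.inner_apply_left _ hz _ hu _ hu, hlie, inner_zero_right]

end IsJMap

namespace IsHTypeJMap

theorem inner_apply_apply (hJ : IsHTypeJMap Z V J) (hz : z ∈ Z) (hu : u ∈ V) (hv : v ∈ V) :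
    ⟪J z u, J z v⟫ = ‖z‖ ^ 2 * ⟪u, v⟫ := by
  rcases eq_or_ne z 0 with rfl | hz0
  · have hJ0 : ∀ x ∈ V, J 0 x = 0 := fun x hx => by
      simpa using hJ.smul_left 0 Z.zero_mem hx
    simp [hJ0 _ hu, hJ0 _ hv]
  · have hnorm : ‖z‖ ≠ 0 := norm_ne_zero_iff.mpr hz0
    have hunit : ‖‖z‖⁻¹ • z‖ = 1 := by rw [norm_smul, norm_inv, norm_norm, inv_mul_cancel₀ hnorm]
    have hz' : ‖z‖⁻¹ • z ∈ Z := Z.smul_mem _ hz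
    have hrescale : z = ‖z‖ • ‖z‖⁻¹ • z := by rw [smul_smul, mul_inv_cancel₀ hnorm, one_smul]
    rw [hrescale, hJ.smul_left _ hz' hu, hJ.smul_left _ hz' hv, real_inner_smul_left,
      real_inner_smul_right, hJ.inner_apply_apply_of_norm_eq_one _ hz' hunit _ hu _ hv,
      ← hrescale]
    ring

/-- `J z` is a multiple of an isometry, hence additive. -/
theorem map_add (hJ : IsHTypeJMap Z V J) (hz : z ∈ Z) (hu : u ∈ V) (hv : v ∈ V) :
    J z (u + v) = J z u + J z v := by
  have huv := V.add_mem hu hv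
  have h0 : ⟪J z (u + v) - (J z u + J z v), J z (u + v) - (J z u + J z v)⟫ = 0 := by
    simp only [inner_sub_left, inner_sub_right, inner_add_left, inner_add_right,
      hJ.inner_apply_apply hz huv huv, hJ.inner_apply_apply hz huv hu,
      hJ.inner_apply_apply hz huv hv, hJ.inner_apply_apply hz hu huv,
      hJ.inner_apply_apply hz hu hu, hJ.inner_apply_apply hz hu hv,
      hJ.inner_apply_apply hz hv huv, hJ.inner_apply_apply hz hv hu,
      hJ.inner_apply_apply hz hv hv]
    ring
  exact sub_eq_zero.mp (inner_self_eq_zero.mp h0)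

theorem inner_apply_left_eq_neg (hJ : IsHTypeJMap Z V J) (hlie : ∀ x : G, ⁅x, x⁆ = 0)
    (hz : z ∈ Z) (hu : u ∈ V) (hv : v ∈ V) : ⟪J z u, v⟫ = -⟪u, J z v⟫ := by
  have h := hJ.inner_apply_self hlie hz (V.add_mem hu hv)
  rw [hJ.map_add hz hu hv, inner_add_left, inner_add_right, inner_add_right,
    hJ.inner_apply_self hlie hz hu, hJ.inner_apply_self hlie hz hv,
    real_inner_comm u (J z v)] at h
  linarith

theorem inner_apply_add_inner_apply (hJ : IsHTypeJMap Z V J) (hz : z ∈ Z) (hw : w ∈ Z)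
    (hu : u ∈ V) (hv : v ∈ V) :
    ⟪J z u, J w v⟫ + ⟪J w u, J z v⟫ = 2 * ⟪z, w⟫ * ⟪u, v⟫ := by
  have h := hJ.inner_apply_apply (Z.add_mem hz hw) hu hv
  rw [hJ.add_left hz hw hu, hJ.add_left hz hw hv, inner_add_left, inner_add_right,
    inner_add_right, hJ.inner_apply_apply hz hu hv, hJ.inner_apply_apply hw hu hv,
    norm_add_sq_real] at h
  linarith

theorem apply_apply_add_apply_apply (hJ : IsHTypeJMap Z V J) (hlie : ∀ x : G, ⁅x, x⁆ = 0)
    (hz : z ∈ Z) (hw : w ∈ Z) (hzw : ⟪z, w⟫ = 0) (hu : u ∈ V) :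
    J z (J w u) + J w (J z u) = 0 := by
  have hwu := hJ.apply_mem _ hw _ hu
  have hzu := hJ.apply_mem _ hz _ hu
  refine V.eq_of_forall_inner_eq
    (V.add_mem (hJ.apply_mem _ hz _ hwu) (hJ.apply_mem _ hw _ hzu)) V.zero_mem fun v hv => ?_
  have h := hJ.inner_apply_add_inner_apply hz hw hu hv
  rw [hzw] at h
  rw [inner_add_left, inner_zero_left, hJ.inner_apply_left_eq_neg hlie hz hwu hv,
    hJ.inner_apply_left_eq_neg hlie hw hzu hv]
  linarith

end IsHTypeJMap

end Real

section Complex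

open Complex

variable {G : Type*} [NormedAddCommGroup G] [InnerProductSpace ℝ G] [Module ℂ G]
  {𝔷 : Submodule ℂ G} {J : G → G → G} {z w u : G}

theorem inner_I_smul_left (hherm : ∀ x y : G, ⟪I • x, I • y⟫ = ⟪x, y⟫) (x y : G) :
    ⟪I • x, y⟫ = -⟪x, I • y⟫ := by
  rw [← hherm, smul_smul, I_mul_I, neg_one_smul, inner_neg_left]

variable [IsScalarTower ℝ ℂ G]

theorem I_smul_mem_orthogonal (hherm : ∀ x y : G, ⟪I • x, I • y⟫ = ⟪x, y⟫)
    (hu : u ∈ (𝔷.restrictScalars ℝ)ᗮ) : I • u ∈ (𝔷.restrictScalars ℝ)ᗮ := by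
  rw [Submodule.mem_orthogonal] at hu ⊢
  intro y hy
  rw [← neg_neg ⟪y, I • u⟫, ← inner_I_smul_left hherm, hu _ (𝔷.smul_mem I hy), neg_zero]

variable [LieRing G]

theorem IsJMap.apply_I_smul
    (hJ : IsJMap (𝔷.restrictScalars ℝ) (𝔷.restrictScalars ℝ)ᗮ J)
    (hbil : ∀ (a : ℂ) (x y : G), ⁅a • x, y⁆ = a • ⁅x, y⁆)
    (hherm : ∀ x y : G, ⟪I • x, I • y⟫ = ⟪x, y⟫) (hz : z ∈ 𝔷)
    (hu : u ∈ (𝔷.restrictScalars ℝ)ᗮ) : J z (I • u) = -J (I • z) u := by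
  refine Submodule.eq_of_forall_inner_eq _ (hJ.apply_mem _ hz _ (I_smul_mem_orthogonal hherm hu))
    (Submodule.neg_mem _ (hJ.apply_mem _ (𝔷.smul_mem I hz) _ hu)) fun v hv => ?_
  rw [hJ.inner_apply_left _ hz _ (I_smul_mem_orthogonal hherm hu) _ hv, hbil, inner_neg_left,
    hJ.inner_apply_left _ (𝔷.smul_mem I hz) _ hu _ hv, inner_I_smul_left hherm, neg_neg]

theorem IsHTypeJMap.I_smul_apply
    (hJ : IsHTypeJMap (𝔷.restrictScalars ℝ) (𝔷.restrictScalars ℝ)ᗮ J)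
    (hlie : ∀ x : G, ⁅x, x⁆ = 0) (hbil : ∀ (a : ℂ) (x y : G), ⁅a • x, y⁆ = a • ⁅x, y⁆)
    (hherm : ∀ x y : G, ⟪I • x, I • y⟫ = ⟪x, y⟫) (hz : z ∈ 𝔷)
    (hu : u ∈ (𝔷.restrictScalars ℝ)ᗮ) : J (I • z) u = I • J z u := by
  have hIz : I • z ∈ 𝔷 := 𝔷.smul_mem I hz
  refine Submodule.eq_of_forall_inner_eq _ (hJ.apply_mem _ hIz _ hu)
    (I_smul_mem_orthogonal hherm (hJ.apply_mem _ hz _ hu)) fun v hv => ?_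
  have hIv := I_smul_mem_orthogonal hherm hv
  rw [inner_I_smul_left hherm, hJ.inner_apply_left_eq_neg hlie hz hu hIv,
    hJ.apply_I_smul hbil hherm hz hv, inner_neg_right, neg_neg,
    hJ.inner_apply_left_eq_neg hlie hIz hu hv]

/-- Anticommutation of `J z` with `J (I • w)` makes `J z` and `J w` commute. -/
theorem IsHTypeJMap.apply_apply_comm
    (hJ : IsHTypeJMap (𝔷.restrictScalars ℝ) (𝔷.restrictScalars ℝ)ᗮ J)
    (hlie : ∀ x : G, ⁅x, x⁆ = 0) (hbil : ∀ (a : ℂ) (x y : G), ⁅a • x, y⁆ = a • ⁅x, y⁆)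
    (hherm : ∀ x y : G, ⟪I • x, I • y⟫ = ⟪x, y⟫) (hz : z ∈ 𝔷) (hw : w ∈ 𝔷)
    (hzw : ⟪I • z, w⟫ = 0) (hu : u ∈ (𝔷.restrictScalars ℝ)ᗮ) :
    J w (J z u) = J z (J w u) := by
  have hzIw : ⟪z, I • w⟫ = 0 := by simpa [hzw] using (inner_I_smul_left hherm z w).symm
  have h := hJ.apply_apply_add_apply_apply hlie hz (𝔷.smul_mem I hw) hzIw hu
  rw [hJ.I_smul_apply hlie hbil hherm hw hu, hJ.apply_I_smul hbil hherm hz (hJ.apply_mem _ hw _ hu),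
    hJ.I_smul_apply hlie hbil hherm hz (hJ.apply_mem _ hw _ hu),
    hJ.I_smul_apply hlie hbil hherm hw (hJ.apply_mem _ hz _ hu), neg_add_eq_zero] at h
  exact smul_right_injective G I_ne_zero h.symm

end Complex

theorem Jz_Jw_eq_zero_of_complex_orthogonal_general
    {G : Type*} [LieRing G]
    [NormedAddCommGroup G] [InnerProductSpace ℝ G]
    [Module ℂ G] [IsScalarTower ℝ ℂ G]
    (hbil : ∀ (a : ℂ) (x y : G), ⁅a • x, y⁆ = a • ⁅x, y⁆)
    (hherm : ∀ x y : G, ⟪(Complex.I : ℂ) • x, (Complex.I : ℂ) • y⟫ = ⟪x, y⟫)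
    (𝔷 : Submodule ℂ G)
    (J : G → G → G)
    (hJmem : ∀ z ∈ 𝔷, ∀ u ∈ (𝔷.restrictScalars ℝ)ᗮ, J z u ∈ (𝔷.restrictScalars ℝ)ᗮ)
    (hJdef : ∀ z ∈ 𝔷, ∀ u ∈ (𝔷.restrictScalars ℝ)ᗮ, ∀ v ∈ (𝔷.restrictScalars ℝ)ᗮ,
      ⟪J z u, v⟫ = ⟪z, ⁅u, v⁆⟫)
    (h2 : ∀ z ∈ 𝔷, ‖z‖ = 1 → ∀ u ∈ (𝔷.restrictScalars ℝ)ᗮ, ∀ v ∈ (𝔷.restrictScalars ℝ)ᗮ,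
      ⟪J z u, J z v⟫ = ⟪u, v⟫) :
    ∀ z ∈ 𝔷, ∀ w ∈ 𝔷, ⟪z, w⟫ = 0 → ⟪(Complex.I : ℂ) • z, w⟫ = 0 →
      ∀ u ∈ (𝔷.restrictScalars ℝ)ᗮ, J z (J w u) = 0 ∧ J w (J z u) = 0 := by
  intro z hz w hw hzw hIzw u hu
  have hJ : IsHTypeJMap (𝔷.restrictScalars ℝ) (𝔷.restrictScalars ℝ)ᗮ J := ⟨⟨hJmem, hJdef⟩, h2⟩
  have hlie : ∀ x : G, ⁅x, x⁆ = 0 :=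
    lie_self_eq_zero_of_lie_zero_zero (by simpa using hbil 0 0 0)
  have hcomm := hJ.apply_apply_comm hlie hbil hherm hz hw hIzw hu
  have hanti := hJ.apply_apply_add_apply_apply hlie hz hw hzw hu
  rw [hcomm, ← two_smul ℝ] at hanti
  have hzero : J z (J w u) = 0 := (smul_eq_zero.mp hanti).resolve_left two_ne_zero
  exact ⟨hzero, hcomm ▸ hzero⟩

/-- In a complex H-type Lie algebra, if `z, w ∈ 𝔷` satisfy `⟪z, w⟫ = 0` and
`⟪i•z, w⟫ = 0`, then `J z ∘ J w = J w ∘ J z = 0` on `𝔳`. -/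
theorem Jz_Jw_eq_zero_of_complex_orthogonal
    {G : Type*} [LieRing G]
    [NormedAddCommGroup G] [InnerProductSpace ℝ G]
    [Module ℂ G] [IsScalarTower ℝ ℂ G] [FiniteDimensional ℂ G]
    (hbil : ∀ (a : ℂ) (x y : G), ⁅a • x, y⁆ = a • ⁅x, y⁆)
    (hherm : ∀ x y : G, ⟪(Complex.I : ℂ) • x, (Complex.I : ℂ) • y⟫ = ⟪x, y⟫)
    (𝔷 : Submodule ℂ G) (h𝔷 : ∀ x : G, x ∈ 𝔷 ↔ ∀ y : G, ⁅x, y⁆ = 0)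
    (J : G → G → G)
    (hJmem : ∀ z ∈ 𝔷, ∀ u ∈ (𝔷.restrictScalars ℝ)ᗮ, J z u ∈ (𝔷.restrictScalars ℝ)ᗮ)
    (hJdef : ∀ z ∈ 𝔷, ∀ u ∈ (𝔷.restrictScalars ℝ)ᗮ, ∀ v ∈ (𝔷.restrictScalars ℝ)ᗮ,
      ⟪J z u, v⟫ = ⟪z, ⁅u, v⁆⟫)
    (h1 : ∀ u ∈ (𝔷.restrictScalars ℝ)ᗮ, ∀ v ∈ (𝔷.restrictScalars ℝ)ᗮ, ⁅u, v⁆ ∈ 𝔷)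
    (h2 : ∀ z ∈ 𝔷, ‖z‖ = 1 → ∀ u ∈ (𝔷.restrictScalars ℝ)ᗮ, ∀ v ∈ (𝔷.restrictScalars ℝ)ᗮ,
      ⟪J z u, J z v⟫ = ⟪u, v⟫) :
    ∀ z ∈ 𝔷, ∀ w ∈ 𝔷, ⟪z, w⟫ = 0 → ⟪(Complex.I : ℂ) • z, w⟫ = 0 →
      ∀ u ∈ (𝔷.restrictScalars ℝ)ᗮ, J z (J w u) = 0 ∧ J w (J z u) = 0 :=
  Jz_Jw_eq_zero_of_complex_orthogonal_general hbil hherm 𝔷 J hJmem hJdef h2
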